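/- (Uniqueness of coinitial independence) Suppose (Proc, Lab, →fb, ι1) and (Proc, Lab, →fb, ι2) are two pre-reversible LTSIs with the same underlying combined LTS. Then ι1 and ι2 agree on coinitial transitions. -/
import Mathlib


namespace RLTS

universe u v

/-- Transitions over processes P and labels L; `fwd? = true` means forward. -/
structure Tr (P : Type u) (L : Type v) : Type (max u v) where
  src : P
  fwd? : Bool
  lbl : L
  tgt : P

variable {P : Type u} {L : Type v}

/-- The reverse of a transition. -/
def Tr.rev (t : Tr P L) : Tr P L := ⟨t.tgt, !t.fwd?, t.lbl, t.src⟩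

/-- A combined LTS: forward and backward transition relations satisfying the Loop Lemma. -/
structure CLTS (P : Type u) (L : Type v) : Type (max u v) where
  fwd : P → L → P → Prop
  bwd : P → L → P → Prop
  loop : ∀ X a Y, fwd X a Y ↔ bwd Y a X

/-- An LTS with independence: a combined LTS with an irreflexive symmetric
independence relation on transitions. -/
structure LTSI (P : Type u) (L : Type v) extends CLTS P L : Type (max u v) where
  ind : Tr P L → Tr P L → Prop
  ind_irrefl : ∀ t, ¬ ind t t
  ind_symm : ∀ t u, ind t u → ind u t

/-- Validity of a transition in an LTSI. -/
def LTSI.Valid (M : LTSI P L) (t : Tr P L) : Prop :=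
  if t.fwd? then M.fwd t.src t.lbl t.tgt else M.bwd t.src t.lbl t.tgt

/-- A commuting square: t, u coinitial; u', t' the opposite cofinal sides. -/
def LTSI.Square (M : LTSI P L) (t u u' t' : Tr P L) : Prop :=
  M.Valid t ∧ M.Valid u ∧ M.Valid u' ∧ M.Valid t' ∧
  t.src = u.src ∧ u'.src = t.tgt ∧ t'.src = u.tgt ∧ u'.tgt = t'.tgt ∧
  u'.lbl = u.lbl ∧ u'.fwd? = u.fwd? ∧ t'.lbl = t.lbl ∧ t'.fwd? = t.fwd?

/-- Square property. -/
def LTSI.SP (M : LTSI P L) : Prop :=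
  ∀ t u : Tr P L, M.Valid t → M.Valid u → t.src = u.src → M.ind t u →
    ∃ u' t' : Tr P L, M.Square t u u' t'

/-- Backward transitions are independent. -/
def LTSI.BTI (M : LTSI P L) : Prop :=
  ∀ t u : Tr P L, M.Valid t → M.Valid u → t.src = u.src →
    t.fwd? = false → u.fwd? = false → t ≠ u → M.ind t u

/-- Well-foundedness: no infinite reverse computation. -/
def LTSI.WF (M : LTSI P L) : Prop :=
  ∀ (Ps : ℕ → P) (as : ℕ → L), ¬ ∀ i : ℕ, M.fwd (Ps (i + 1)) (as i) (Ps i)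

/-- Propagation of coinitial independence. -/
def LTSI.PCI (M : LTSI P L) : Prop :=
  ∀ t u u' t' : Tr P L, M.Square t u u' t' → M.ind t u → M.ind u' t.rev

/-- Pre-reversible LTSI. -/
def LTSI.PreRev (M : LTSI P L) : Prop := M.SP ∧ M.BTI ∧ M.WF ∧ M.PCI

/-- Event equivalence: the smallest equivalence such that in a commuting square
with independent sides, `t ∼ t'` and `reverse t ∼ t'`. -/
inductive LTSI.EvEq (M : LTSI P L) : Tr P L → Tr P L → Prop where
  | refl (t : Tr P L) : LTSI.EvEq M t t
  | symm {t u : Tr P L} : LTSI.EvEq M t u → LTSI.EvEq M u t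
  | trans {t u v : Tr P L} : LTSI.EvEq M t u → LTSI.EvEq M u v → LTSI.EvEq M t v
  | sq {t u u' t' : Tr P L} : M.Square t u u' t' → M.ind t u → LTSI.EvEq M t t'
  | sqrev {t u u' t' : Tr P L} : M.Square t u u' t' → M.ind t u → LTSI.EvEq M t.rev t'

/-- Independence respects events. -/
def LTSI.IRE (M : LTSI P L) : Prop :=
  ∀ t t' u : Tr P L, M.EvEq t t' → M.ind t' u → M.ind t u

/-- Reversing preserves independence. -/
def LTSI.RPI (M : LTSI P L) : Prop :=
  ∀ t t' : Tr P L, M.ind t t' → M.ind t.rev t'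

/-- Paths of composable valid transitions. -/
inductive LTSI.Path (M : LTSI P L) : P → P → Type (max u v) where
  | nil (X : P) : LTSI.Path M X X
  | cons {X Y Z : P} (t : Tr P L) (hv : M.Valid t) (hs : t.src = X) (ht : t.tgt = Y)
      (r : LTSI.Path M Y Z) : LTSI.Path M X Z

open Classical in
/-- Signed number of occurrences in a path of the event represented by `e`. -/
noncomputable def LTSI.Path.count {M : LTSI P L} (e : Tr P L) :
    ∀ {X Y : P}, M.Path X Y → ℤ
  | _, _, .nil _ => 0
  | _, _, .cons t _ _ _ r =>
      (if M.EvEq t e then (1 : ℤ) else if M.EvEq t e.rev then (-1 : ℤ) else 0)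
        + LTSI.Path.count e r

/-- Membership of a transition in a path. -/
def LTSI.Path.Mem {M : LTSI P L} (u : Tr P L) : ∀ {X Y : P}, M.Path X Y → Prop
  | _, _, .nil _ => False
  | _, _, .cons t _ _ _ r => u = t ∨ LTSI.Path.Mem u r

/-- Length of a path. -/
def LTSI.Path.length {M : LTSI P L} : ∀ {X Y : P}, M.Path X Y → ℕ
  | _, _, .nil _ => 0
  | _, _, .cons _ _ _ _ r => LTSI.Path.length r + 1

/-- A forward-only path. -/
def LTSI.Path.FwdOnly {M : LTSI P L} : ∀ {X Y : P}, M.Path X Y → Prop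
  | _, _, .nil _ => True
  | _, _, .cons t _ _ _ r => t.fwd? = true ∧ LTSI.Path.FwdOnly r

/-- X cannot perform a backward transition. -/
def LTSI.Rooted (M : LTSI P L) (X : P) : Prop := ∀ (a : L) (Y : P), ¬ M.bwd X a Y

/-- e represents a forward event. -/
def LTSI.FwdEvent (M : LTSI P L) (e : Tr P L) : Prop := M.Valid e ∧ e.fwd? = true

/-- Causal ordering on (representatives of) forward events. -/
def LTSI.CausLE (M : LTSI P L) (e e' : Tr P L) : Prop :=
  ∀ (O Z : P) (r : M.Path O Z), M.Rooted O →
    0 < LTSI.Path.count e' r → 0 < LTSI.Path.count e r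

/-- Strict causal ordering. -/
def LTSI.EvLT (M : LTSI P L) (e e' : Tr P L) : Prop :=
  M.CausLE e e' ∧ ¬ M.EvEq e e'

/-- Conflict on (representatives of) forward events. -/
def LTSI.Conflict (M : LTSI P L) (e e' : Tr P L) : Prop :=
  ∀ (O Z : P) (r : M.Path O Z), M.Rooted O →
    ¬ (0 < LTSI.Path.count e r ∧ 0 < LTSI.Path.count e' r)

/-- Core independence on events. -/
def LTSI.CoreInd (M : LTSI P L) (e e' : Tr P L) : Prop :=
  ∃ t t' : Tr P L, M.EvEq t e ∧ M.EvEq t' e' ∧ t.src = t'.src ∧ M.ind t t'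

/-- Composable events. -/
def LTSI.EvComposable (M : LTSI P L) (e e' : Tr P L) : Prop :=
  ∃ t t' : Tr P L, M.EvEq t e ∧ M.EvEq t' e' ∧ M.Valid t ∧ M.Valid t' ∧ t.tgt = t'.src

/-- e is an immediate predecessor of e'. -/
def LTSI.ImmPred (M : LTSI P L) (e e' : Tr P L) : Prop :=
  M.EvLT e e' ∧ ¬ ∃ f : Tr P L, M.FwdEvent f ∧ M.EvLT e f ∧ M.EvLT f e'

end RLTS

namespace RLTS

variable {P : Type u} {L : Type v}

theorem Tr.rev_rev (t : Tr P L) : t.rev.rev = t := by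
  cases t; simp [Tr.rev]

theorem LTSI.valid_rev (M : LTSI P L) {t : Tr P L} (h : M.Valid t) : M.Valid t.rev := by
  unfold LTSI.Valid at *
  cases t with
  | mk s f l g =>
    cases f
    · simp only [Tr.rev] at *
      simp only [Bool.not_false, if_true, if_false] at *
      exact (M.loop g l s).mpr h
    · simp only [Tr.rev] at *
      simp only [Bool.not_true, if_true, if_false] at *
      exact (M.loop s l g).mp h

theorem LTSI.valid_of_eq {M1 M2 : LTSI P L} (hsame : M1.toCLTS = M2.toCLTS)
    {t : Tr P L} (h : M1.Valid t) : M2.Valid t := by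
  unfold LTSI.Valid at *
  rwa [show M1.toCLTS.fwd = M2.toCLTS.fwd from congrArg CLTS.fwd hsame,
    show M1.toCLTS.bwd = M2.toCLTS.bwd from congrArg CLTS.bwd hsame] at h

theorem LTSI.square_of_eq {M1 M2 : LTSI P L} (hsame : M1.toCLTS = M2.toCLTS)
    {t u u' t' : Tr P L} (h : M1.Square t u u' t') : M2.Square t u u' t' := by
  obtain ⟨h1, h2, h3, h4, hr⟩ := h
  exact ⟨M1.valid_of_eq hsame h1, M1.valid_of_eq hsame h2, M1.valid_of_eq hsame h3,
    M1.valid_of_eq hsame h4, hr⟩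

/-- Re-reading a commuting square from another corner. -/
theorem LTSI.square_rev {M : LTSI P L} {t u u' t' : Tr P L} (h : M.Square t u u' t') :
    M.Square t.rev u' u t'.rev := by
  obtain ⟨v1, v2, v3, v4, e1, e2, e3, e4, e5, e6, e7, e8⟩ := h
  refine ⟨M.valid_rev v1, v3, v2, M.valid_rev v4, ?_, ?_, ?_, ?_, ?_, ?_, ?_, ?_⟩ <;>
    simp [Tr.rev, e1, e2, e3, e4, e5, e6, e7, e8]

/-- The mixed case: a forward and a backward coinitial transition. -/
theorem LTSI.mixed_case {M1 M2 : LTSI P L} (hsame : M1.toCLTS = M2.toCLTS)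
    (h1 : M1.PreRev) (h2 : M2.PreRev) {t u : Tr P L}
    (hvt : M1.Valid t) (hvu : M1.Valid u) (hco : t.src = u.src)
    (htf : t.fwd? = true) (huf : u.fwd? = false) (hind : M1.ind t u) :
    M2.ind t u := by
  obtain ⟨sp1, _, _, pci1⟩ := h1
  obtain ⟨_, bti2, _, pci2⟩ := h2
  obtain ⟨u', t', hsq⟩ := sp1 t u hvt hvu hco hind
  have hpci := pci1 t u u' t' hsq hind
  have hne : t.rev ≠ u' := fun h => M1.ind_irrefl u' (h ▸ hpci)
  have hsq' := M1.square_rev hsq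
  have hsq2 := M1.square_of_eq hsame hsq'
  have hbti : M2.ind t.rev u' := by
    refine bti2 t.rev u' ?_ ?_ ?_ ?_ ?_ hne
    · exact M1.valid_of_eq hsame (M1.valid_rev hvt)
    · exact M1.valid_of_eq hsame hsq.2.2.1
    · exact hsq.2.2.2.2.2.1.symm
    · simp [Tr.rev, htf]
    · rw [hsq.2.2.2.2.2.2.2.2.2.1, huf]
  have := pci2 t.rev u' u t'.rev hsq2 hbti
  rw [Tr.rev_rev] at this
  exact M2.ind_symm _ _ this

/-- One direction of uniqueness. -/
theorem LTSI.coinitial_sub {M1 M2 : LTSI P L} (hsame : M1.toCLTS = M2.toCLTS)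
    (h1 : M1.PreRev) (h2 : M2.PreRev) {t u : Tr P L}
    (hvt : M1.Valid t) (hvu : M1.Valid u) (hco : t.src = u.src)
    (hind : M1.ind t u) : M2.ind t u := by
  obtain ⟨sp1, _, _, pci1⟩ := id h1
  obtain ⟨_, bti2, _, pci2⟩ := id h2
  match htf : t.fwd?, huf : u.fwd? with
  | true, false => exact LTSI.mixed_case hsame h1 h2 hvt hvu hco htf huf hind
  | false, true =>
    exact M2.ind_symm _ _ (LTSI.mixed_case hsame h1 h2 hvu hvt hco.symm huf htf
      (M1.ind_symm _ _ hind))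
  | false, false =>
    have hne : t ≠ u := fun h => M1.ind_irrefl u (h ▸ hind)
    exact bti2 t u (M1.valid_of_eq hsame hvt) (M1.valid_of_eq hsame hvu) hco htf huf hne
  | true, true =>
    obtain ⟨u', t', hsq⟩ := sp1 t u hvt hvu hco hind
    have hpci := pci1 t u u' t' hsq hind
    have huv' : M1.Valid u' := hsq.2.2.1
    have hrv : M1.Valid t.rev := M1.valid_rev hvt
    have hcos : u'.src = t.rev.src := hsq.2.2.2.2.2.1
    have hu'f : u'.fwd? = true := by rw [hsq.2.2.2.2.2.2.2.2.2.1, huf]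
    have hrf : t.rev.fwd? = false := by simp [Tr.rev, htf]
    have hmix : M2.ind u' t.rev :=
      LTSI.mixed_case hsame h1 h2 huv' hrv hcos hu'f hrf hpci
    have hsq2 := M1.square_of_eq hsame (M1.square_rev hsq)
    have := pci2 t.rev u' u t'.rev hsq2 (M2.ind_symm _ _ hmix)
    rw [Tr.rev_rev] at this
    exact M2.ind_symm _ _ this

/-- **Uniqueness of coinitial independence.** Two pre-reversible LTSIs with the same
underlying combined LTS have independence relations agreeing on coinitial transitions. -/
theorem uniqueness_of_coinitial_independence {P : Type u} {L : Type v}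
    (M1 M2 : LTSI P L) (hsame : M1.toCLTS = M2.toCLTS)
    (h1 : M1.PreRev) (h2 : M2.PreRev) :
    ∀ t u : Tr P L, M1.Valid t → M1.Valid u → t.src = u.src →
      (M1.ind t u ↔ M2.ind t u) := by
  intro t u hvt hvu hco
  constructor
  · exact fun h => LTSI.coinitial_sub hsame h1 h2 hvt hvu hco h
  · exact fun h => LTSI.coinitial_sub hsame.symm h2 h1
      (M1.valid_of_eq hsame hvt) (M1.valid_of_eq hsame hvu) hco h

end RLTS
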